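/- arXiv:1711.00963 — 4 statements merged into one kernel-verified Lean document; each statement's English description precedes it below -/
import Mathlib

section
/- Let G be a temporal graph and suppose that every layer G_t with t in the interval [t_1, t_2] is edgeless (contains no time-edge). Let G' be obtained from G by replacing every time-edge (e, t') with t' > t_2 by (e, t' − t_2 + t_1 − 1). Then G has a non-strict temporal (s,z)-path if and only if G' has a non-strict temporal (s,z)-path. -/
/-!
Since no label falls in `[t₁, t₂]`, the shift is strictly monotone on the labels that occur, and
relabelling a temporal graph along a map that is strictly monotone on its labels transports
non-strict temporal paths in both directions: forward along the map, backward along an inverse of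
it on the label set.
-/

namespace TempSep

variable {V : Type*}

/-- A list of directed time-edges forms a temporal `(s,z)`-path; consecutive
time labels are related by `R` (`≤` for non-strict, `<` for strict paths). -/
def IsPathWith (R : ℕ → ℕ → Prop) (E : Set (V × V × ℕ)) (s z : V)
    (p : List (V × V × ℕ)) : Prop :=
  p ≠ [] ∧
  p.head?.map Prod.fst = some s ∧
  p.getLast?.map (fun e => e.2.1) = some z ∧
  (∀ e ∈ p, e ∈ E) ∧
  p.Chain' (fun a b => a.2.1 = b.1) ∧
  (s :: p.map (fun e => e.2.1)).Nodup ∧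
  p.Chain' (fun a b => R a.2.2 b.2.2)

/-- A non-strict temporal `(s,z)`-path. -/
abbrev IsPath (E : Set (V × V × ℕ)) (s z : V) (p : List (V × V × ℕ)) : Prop :=
  IsPathWith (· ≤ ·) E s z p

/-- A strict temporal `(s,z)`-path. -/
abbrev IsStrictPath (E : Set (V × V × ℕ)) (s z : V) (p : List (V × V × ℕ)) : Prop :=
  IsPathWith (· < ·) E s z p

/-- The path `p` avoids the vertex set `S`. -/
def Avoids (S : Set V) (p : List (V × V × ℕ)) : Prop :=
  ∀ e ∈ p, e.1 ∉ S ∧ e.2.1 ∉ S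

/-- `S` is a (non-strict) temporal `(s,z)`-separator. -/
def IsSep (E : Set (V × V × ℕ)) (s z : V) (S : Set V) : Prop :=
  s ∉ S ∧ z ∉ S ∧ ∀ p, IsPath E s z p → ¬ Avoids S p

/-- `S` is a strict temporal `(s,z)`-separator. -/
def IsStrictSep (E : Set (V × V × ℕ)) (s z : V) (S : Set V) : Prop :=
  s ∉ S ∧ z ∉ S ∧ ∀ p, IsStrictPath E s z p → ¬ Avoids S p

def relabel (φ : ℕ → ℕ) (e : V × V × ℕ) : V × V × ℕ :=
  (e.1, e.2.1, φ e.2.2)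

theorem IsPathWith.map_relabel {R R' : ℕ → ℕ → Prop} {E E' : Set (V × V × ℕ)} {s z : V}
    {p : List (V × V × ℕ)} {φ : ℕ → ℕ} (hp : IsPathWith R E s z p)
    (hE : ∀ e ∈ E, relabel φ e ∈ E')
    (hφ : ∀ e ∈ E, ∀ e' ∈ E, R e.2.2 e'.2.2 → R' (φ e.2.2) (φ e'.2.2)) :
    IsPathWith R' E' s z (p.map (relabel φ)) := by
  obtain ⟨hne, hhead, hlast, hmem, hlink, hnodup, hlabels⟩ := hp
  refine ⟨by simpa using hne, ?_, ?_, ?_, ?_, ?_, ?_⟩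
  · simpa [List.head?_map, Option.map_map, Function.comp_def, relabel] using hhead
  · simpa [List.getLast?_map, Option.map_map, Function.comp_def, relabel] using hlast
  · simp only [List.mem_map]
    rintro _ ⟨e, he, rfl⟩
    exact hE e (hmem e he)
  · exact (List.isChain_map _).2 hlink
  · simpa [List.map_map, Function.comp_def, relabel] using hnodup
  · exact (List.isChain_map _).2 <|
      hlabels.imp_of_mem_imp fun e e' he he' => hφ e (hmem e he) e' (hmem e' he')

theorem exists_isPath_image_relabel_iff {E : Set (V × V × ℕ)} {s z : V} {φ : ℕ → ℕ}
    (hφ : StrictMonoOn φ ((fun e => e.2.2) '' E)) :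
    (∃ p, IsPath (relabel φ '' E) s z p) ↔ ∃ p, IsPath E s z p := by
  have hlabel {e} (he : e ∈ E) : e.2.2 ∈ (fun e => e.2.2) '' E := Set.mem_image_of_mem _ he
  constructor
  · rintro ⟨p, hp⟩
    set ψ := Function.invFunOn φ ((fun e => e.2.2) '' E)
    have hψφ : ∀ e ∈ E, ψ (φ e.2.2) = e.2.2 := fun e he =>
      hφ.injOn.leftInvOn_invFunOn (hlabel he)
    refine ⟨p.map (relabel ψ), hp.map_relabel ?_ ?_⟩
    · rintro _ ⟨e, he, rfl⟩
      simpa [relabel, hψφ e he] using he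
    · rintro _ ⟨e, he, rfl⟩ _ ⟨e', he', rfl⟩ hle
      simpa [relabel, hψφ e he, hψφ e' he'] using (hφ.le_iff_le (hlabel he) (hlabel he')).1 hle
  · rintro ⟨p, hp⟩
    exact ⟨p.map (relabel φ), hp.map_relabel (fun e he => ⟨e, he, rfl⟩)
      fun e he e' he' => (hφ.le_iff_le (hlabel he) (hlabel he')).2⟩

theorem shift_idle_layers_general (E : Set (V × V × ℕ)) (s z : V) (t₁ t₂ : ℕ)
    (hidle : ∀ e ∈ E, e.2.2 < t₁ ∨ t₂ < e.2.2) :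
    (∃ p, IsPath E s z p) ↔
      (∃ p, IsPath
        ((fun e : V × V × ℕ =>
          (e.1, e.2.1, if t₂ < e.2.2 then e.2.2 - t₂ + t₁ - 1 else e.2.2)) '' E)
        s z p) := by
  have hshift : StrictMonoOn (fun t => if t₂ < t then t - t₂ + t₁ - 1 else t)
      ((fun e => e.2.2) '' E) := by
    rintro _ ⟨e, he, rfl⟩ _ ⟨e', he', rfl⟩ hlt
    have := hidle e he
    have := hidle e' he'
    dsimp only at hlt ⊢
    split_ifs <;> omega
  exact (exists_isPath_image_relabel_iff hshift).symm

/-- If every layer in the interval `[t₁, t₂]` is edgeless, then shifting every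
label `t' > t₂` to `t' - t₂ + t₁ - 1` preserves the existence of a non-strict
temporal `(s,z)`-path. -/
theorem shift_idle_layers (E : Set (V × V × ℕ)) (s z : V) (t₁ t₂ : ℕ)
    (h1 : 1 ≤ t₁) (h12 : t₁ ≤ t₂)
    (hidle : ∀ e ∈ E, e.2.2 < t₁ ∨ t₂ < e.2.2) :
    (∃ p, IsPath E s z p) ↔
      (∃ p, IsPath
        ((fun e : V × V × ℕ =>
          (e.1, e.2.1, if t₂ < e.2.2 then e.2.2 - t₂ + t₁ - 1 else e.2.2)) '' E)
        s z p) :=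
  shift_idle_layers_general E s z t₁ t₂ hidle

end TempSep
end

section
/- Let G be a temporal graph, s,z distinct vertices, and H the strict static expansion of (G,s,z). Then there is a strict temporal (s,z)-path in G if and only if there is a directed (s,z)-path in H. -/
/-!
A strict temporal path `s → w → ⋯ → z` is traced in the expansion by leaving `src` along its
first edge and then alternating two moves: climb the column of the current vertex to the
departure time of the next edge (column arcs join consecutive elements of `φ(v)`, so every later
element is reachable), and take the step arc of that edge; symmetry of `E` puts each arrival
time into `φ` of the new vertex. Conversely, step arcs raise the time by one and column arcs only
raise it, so a directed path `src → snk` projects to a strict temporal walk from `s` to `z`, and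
erasing its loops leaves a strict temporal path.
-/

namespace TempSep

variable {V : Type*}

/-- The vertices of the strict static expansion: source, sink, and time copies. -/
inductive ExpV (V : Type*) where
  | src : ExpV V
  | snk : ExpV V
  | node : V → ℕ → ExpV V

/-- `phi E v` is the set `{t, t+1 : ∃ w, ({v,w},t) ∈ E}`. -/
def phi (E : Set (V × V × ℕ)) (v : V) : Set ℕ :=
  {x | ∃ w t, (v, w, t) ∈ E ∧ (x = t ∨ x = t + 1)}

/-- The arcs of the strict static expansion of `(G,s,z)`. -/
inductive Arc (E : Set (V × V × ℕ)) (s z : V) : ExpV V → ExpV V → Prop where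
  | step {v w : V} {t : ℕ} : (v, w, t) ∈ E → v ≠ s → v ≠ z → w ≠ s → w ≠ z →
      Arc E s z (.node v t) (.node w (t + 1))
  | fromSrc {w : V} {t : ℕ} : (s, w, t) ∈ E → w ≠ s → w ≠ z →
      Arc E s z .src (.node w (t + 1))
  | toSnk {v : V} {t : ℕ} : (v, z, t) ∈ E → v ≠ s → v ≠ z →
      Arc E s z (.node v t) .snk
  | col {v : V} {t t' : ℕ} : t ∈ phi E v → t' ∈ phi E v → t < t' →
      (∀ t'' ∈ phi E v, ¬ (t < t'' ∧ t'' < t')) → v ≠ s → v ≠ z →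
      Arc E s z (.node v t) (.node v t')

/-- `StrictWalk E z v t p`: `p` is a strict temporal walk from `v` to `z` that leaves `v`
no earlier than `t`. -/
inductive StrictWalk (E : Set (V × V × ℕ)) (z : V) : V → ℕ → List (V × V × ℕ) → Prop
  | single {v : V} {t t' : ℕ} : (v, z, t') ∈ E → t ≤ t' → StrictWalk E z v t [(v, z, t')]
  | cons {v w : V} {t t' : ℕ} {p : List (V × V × ℕ)} : (v, w, t') ∈ E → t ≤ t' →
      StrictWalk E z w (t' + 1) p → StrictWalk E z v t ((v, w, t') :: p)

namespace StrictWalk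

variable {E : Set (V × V × ℕ)} {z v : V} {t : ℕ} {p : List (V × V × ℕ)}

theorem mono {t₀ : ℕ} (h : t₀ ≤ t) : StrictWalk E z v t p → StrictWalk E z v t₀ p
  | single hE ht => single hE (h.trans ht)
  | cons hE ht hp => cons hE (h.trans ht) hp

theorem target_mem (hp : StrictWalk E z v t p) : z ∈ p.map (·.2.1) := by
  induction hp <;> simp_all

theorem exists_suffix (hp : StrictWalk E z v t p) {x : V} (hx : x ∈ v :: p.map (·.2.1))
    (hxz : x ≠ z) :
    ∃ q, StrictWalk E z x t q ∧ (x :: q.map (·.2.1)).Sublist (v :: p.map (·.2.1)) := by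
  induction hp with
  | single hE ht =>
    obtain rfl : x = _ := by simpa [hxz] using hx
    exact ⟨_, single hE ht, .refl _⟩
  | @cons v w t t' p hE ht hp ih =>
    by_cases hxv : x = v
    · subst hxv
      exact ⟨_, cons hE ht hp, .refl _⟩
    obtain ⟨q, hq, hsub⟩ := ih (by simpa [hxv] using hx)
    exact ⟨q, hq.mono (by omega), hsub.cons v⟩

theorem exists_nodup (hp : StrictWalk E z v t p) (hvz : v ≠ z) :
    ∃ q, StrictWalk E z v t q ∧ (v :: q.map (·.2.1)).Nodup := by
  induction hp with
  | single hE ht => exact ⟨_, single hE ht, by simpa using hvz⟩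
  | @cons v w t t' p hE ht hp ih =>
    by_cases hwz : w = z
    · subst hwz
      exact ⟨_, single hE ht, by simpa using hvz⟩
    obtain ⟨q, hq, hnd⟩ := ih hwz
    by_cases hv : v ∈ w :: q.map (·.2.1)
    · obtain ⟨q', hq', hsub⟩ := hq.exists_suffix hv hvz
      exact ⟨q', hq'.mono (by omega), hnd.sublist hsub⟩
    · exact ⟨_, cons hE ht hq, by simpa [hv] using hnd⟩

theorem ne_of_nodup {u : V} (hp : StrictWalk E z v t p)
    (hnd : (u :: v :: p.map (·.2.1)).Nodup) : v ≠ u ∧ v ≠ z := by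
  rw [List.nodup_cons, List.nodup_cons] at hnd
  exact ⟨fun h => hnd.1 (by simp [h]), fun h => hnd.2.1 (h ▸ hp.target_mem)⟩

end StrictWalk

theorem isPathWith_singleton_iff {R : ℕ → ℕ → Prop} {E : Set (V × V × ℕ)} {s z v w : V}
    {t : ℕ} :
    IsPathWith R E s z [(v, w, t)] ↔ v = s ∧ w = z ∧ (v, w, t) ∈ E ∧ s ≠ w := by
  simp only [IsPathWith, ne_eq, List.cons_ne_self, not_false_eq_true, List.head?_cons,
    Option.map_some, Option.some.injEq, List.getLast?_singleton, List.mem_cons, List.not_mem_nil,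
    or_false, forall_eq, List.map_cons, List.map_nil, List.nodup_cons, List.nodup_nil, and_self,
    and_true, true_and, and_congr_right_iff]
  tauto

theorem isPathWith_cons_cons_iff {R : ℕ → ℕ → Prop} {E : Set (V × V × ℕ)} {s z v w : V}
    {t : ℕ} {f : V × V × ℕ} {p : List (V × V × ℕ)} :
    IsPathWith R E s z ((v, w, t) :: f :: p) ↔
      v = s ∧ (v, w, t) ∈ E ∧ s ∉ w :: (f :: p).map (·.2.1) ∧ R t f.2.2 ∧
        IsPathWith R E w z (f :: p) := by
  simp only [IsPathWith, List.Chain', List.isChain_cons_cons, List.map_cons, List.nodup_cons,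
    List.getLast?_cons_cons, List.head?_cons, Option.map_some, Option.some.injEq,
    List.forall_mem_cons, ne_eq, reduceCtorEq, not_false_eq_true, true_and]
  tauto

theorem IsStrictPath.strictWalk {E : Set (V × V × ℕ)} {s z : V} {e : V × V × ℕ}
    {p : List (V × V × ℕ)} (h : IsStrictPath E s z (e :: p)) :
    StrictWalk E z s e.2.2 (e :: p) := by
  induction p generalizing e s with
  | nil =>
    obtain ⟨rfl, rfl, hE, -⟩ := isPathWith_singleton_iff.mp h
    exact .single hE le_rfl
  | cons f p ih =>
    obtain ⟨rfl, hE, -, hlt, hrest⟩ := isPathWith_cons_cons_iff.mp h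
    exact .cons hE le_rfl ((ih hrest).mono hlt)

theorem StrictWalk.isStrictPath {E : Set (V × V × ℕ)} {s z : V} {t : ℕ}
    {p : List (V × V × ℕ)} (hp : StrictWalk E z s t p) (hnd : (s :: p.map (·.2.1)).Nodup) :
    IsStrictPath E s z p := by
  induction hp with
  | single hE _ => exact isPathWith_singleton_iff.mpr ⟨rfl, rfl, hE, by simpa using hnd⟩
  | @cons v w t t' p hE _ hp ih =>
    obtain ⟨f, q, rfl, hf⟩ : ∃ f q, p = f :: q ∧ t' + 1 ≤ f.2.2 := by
      cases hp <;> exact ⟨_, _, rfl, ‹_›⟩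
    rw [List.map_cons, List.nodup_cons] at hnd
    exact isPathWith_cons_cons_iff.mpr ⟨rfl, hE, hnd.1, hf, ih hnd.2⟩

theorem isStrictPath_iff_strictWalk {E : Set (V × V × ℕ)} {s z : V} {p : List (V × V × ℕ)} :
    IsStrictPath E s z p ↔ StrictWalk E z s 0 p ∧ (s :: p.map (·.2.1)).Nodup := by
  refine ⟨fun h => ⟨?_, h.2.2.2.2.2.1⟩, fun ⟨hp, hnd⟩ => hp.isStrictPath hnd⟩
  obtain ⟨e, p, rfl⟩ := List.exists_cons_of_ne_nil h.1
  exact h.strictWalk.mono (Nat.zero_le _)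

section Expansion

open Relation

variable {E : Set (V × V × ℕ)} {s z : V}

theorem reflTransGen_column {v : V} (hvs : v ≠ s) (hvz : v ≠ z) {t t' : ℕ}
    (ht : t ∈ phi E v) (ht' : t' ∈ phi E v) (hle : t ≤ t') :
    ReflTransGen (Arc E s z) (.node v t) (.node v t') := by
  obtain rfl | hlt := hle.eq_or_lt
  · exact .refl
  classical
  have hex : ∃ m ∈ phi E v, t < m := ⟨t', ht', hlt⟩
  have hm := Nat.find_spec hex
  have hmt' : Nat.find hex ≤ t' := Nat.find_min' hex ⟨ht', hlt⟩
  have hnext : ∀ t'' ∈ phi E v, ¬(t < t'' ∧ t'' < Nat.find hex) :=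
    fun t'' ht'' h => Nat.find_min hex h.2 ⟨ht'', h.1⟩
  exact .head (Arc.col ht hm.1 hm.2 hnext hvs hvz) (reflTransGen_column hvs hvz hm.1 ht' hmt')
termination_by t' - t
decreasing_by omega

theorem StrictWalk.reflTransGen_snk (hsym : ∀ u v t, (u, v, t) ∈ E → (v, u, t) ∈ E)
    {v : V} {t : ℕ} {p : List (V × V × ℕ)} (hp : StrictWalk E z v t p) (ht : t ∈ phi E v)
    (hnd : (s :: v :: p.map (·.2.1)).Nodup) :
    ReflTransGen (Arc E s z) (.node v t) .snk := by
  induction hp with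
  | single hE ht' =>
    obtain ⟨hvs, hvz⟩ := (StrictWalk.single hE ht').ne_of_nodup hnd
    exact (reflTransGen_column hvs hvz ht ⟨_, _, hE, .inl rfl⟩ ht').tail (.toSnk hE hvs hvz)
  | @cons v w t t' p hE ht' hp ih =>
    obtain ⟨hvs, hvz⟩ := (StrictWalk.cons hE ht' hp).ne_of_nodup hnd
    have hnd' : (s :: w :: p.map (·.2.1)).Nodup :=
      hnd.sublist ((List.sublist_cons_self _ _).cons_cons s)
    obtain ⟨hws, hwz⟩ := hp.ne_of_nodup hnd'
    exact (reflTransGen_column hvs hvz ht ⟨_, _, hE, .inl rfl⟩ ht').trans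
      (.head (.step hE hvs hvz hws hwz) (ih ⟨v, _, hsym _ _ _ hE, .inr rfl⟩ hnd'))

theorem exists_strictWalk_of_reflTransGen {v : V} {t : ℕ}
    (h : ReflTransGen (Arc E s z) (.node v t) .snk) : ∃ p, StrictWalk E z v t p := by
  generalize ha : ExpV.node v t = a at h
  induction h using ReflTransGen.head_induction_on generalizing v t with
  | refl => cases ha
  | head harc _ ih =>
    subst ha
    cases harc with
    | step hE => obtain ⟨p, hp⟩ := ih rfl; exact ⟨_, .cons hE le_rfl hp⟩
    | toSnk hE => exact ⟨_, .single hE le_rfl⟩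
    | col _ _ hlt => obtain ⟨p, hp⟩ := ih rfl; exact ⟨p, hp.mono hlt.le⟩

end Expansion

/-- There is a strict temporal `(s,z)`-path in `G` iff there is a directed
`(s,z)`-path in the strict static expansion `H` of `(G,s,z)`. -/
theorem strict_path_iff_expansion_path (E : Set (V × V × ℕ)) (s z : V)
    (hsz : s ≠ z) (hsym : ∀ u v t, (u, v, t) ∈ E → (v, u, t) ∈ E)
    (hnosz : ∀ t, (s, z, t) ∉ E ∧ (z, s, t) ∉ E) :
    (∃ p, IsStrictPath E s z p) ↔
      Relation.ReflTransGen (Arc E s z) ExpV.src ExpV.snk := by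
  constructor
  · rintro ⟨p, hp⟩
    obtain ⟨hw, hnd⟩ := isStrictPath_iff_strictWalk.mp hp
    cases hw with
    | single hE _ => exact absurd hE (hnosz _).1
    | cons hE _ hw =>
      obtain ⟨hws, hwz⟩ := hw.ne_of_nodup hnd
      exact .head (.fromSrc hE hws hwz)
        (hw.reflTransGen_snk hsym ⟨s, _, hsym _ _ _ hE, .inr rfl⟩ hnd)
  · intro h
    obtain ⟨w, t, hE, hrest⟩ :
        ∃ w t, (s, w, t) ∈ E ∧ Relation.ReflTransGen (Arc E s z) (.node w (t + 1)) .snk := by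
      rcases h.cases_head with h | ⟨_, harc, hrest⟩
      · cases h
      · cases harc with
        | fromSrc hE => exact ⟨_, _, hE, hrest⟩
    obtain ⟨p, hp⟩ := exists_strictWalk_of_reflTransGen hrest
    obtain ⟨q, hq, hnd⟩ := (StrictWalk.cons hE (Nat.zero_le _) hp).exists_nodup hsz
    exact ⟨q, isStrictPath_iff_strictWalk.mpr ⟨hq, hnd⟩⟩

end TempSep
end

section
/- Let G be a reduced temporal graph with maximum label τ = 4 and distinct vertices s,z. Then the set V_{(1,1)} is empty, i.e., there is no vertex v such that both the shortest strict temporal (s,v)-path and the shortest strict temporal (v,z)-path have length 1. -/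
namespace TempSep

variable {V : Type*}

/-- The underlying simple graph of a temporal graph. -/
def underlyingSG (E : Set (V × V × ℕ)) : SimpleGraph V where
  Adj u v := u ≠ v ∧ ∃ t, (u, v, t) ∈ E ∨ (v, u, t) ∈ E
  symm := by
    constructor
    rintro u v ⟨h, t, ht⟩
    exact ⟨h.symm, t, ht.symm⟩
  loopless := by
    constructor
    rintro u ⟨h, -⟩
    exact h rfl

/-- A temporal graph is *reduced* (w.r.t. `s` and `z`): its underlying graph is
connected, every time-edge lies on some strict temporal `(s,z)`-path, and there
is no strict temporal `(s,z)`-path of length at most two. -/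
structure Reduced (E : Set (V × V × ℕ)) (s z : V) : Prop where
  conn : (underlyingSG E).Connected
  onPath : ∀ v w t, (v, w, t) ∈ E →
    ∃ p, IsStrictPath E s z p ∧ ((v, w, t) ∈ p ∨ (w, v, t) ∈ p)
  noShort : ∀ p, IsStrictPath E s z p → 2 < p.length

/-! Every edge lies on a strict `(s, z)`-path, and such a path has at least three edges with
strictly increasing labels in `[1, 4]`. A path never re-enters `s` and never leaves `z`, so an
edge `(s, v, t₁)` occurs on it as the first edge, forcing `t₁ ≤ 2`, and an edge `(v, z, t₂)` as
the last one, forcing `t₂ ≥ 3`. A vertex of `V_{(1,1)}` would then give the strict path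
`(s, v, t₁), (v, z, t₂)` of length two. -/

theorem _root_.List.Nodup.getLast_notMem_dropLast {α : Type*} {l : List α} (hl : l.Nodup)
    (h : l ≠ []) : l.getLast h ∉ l.dropLast := by
  rw [← List.dropLast_concat_getLast h] at hl
  exact fun hmem => (List.nodup_append.mp hl).2.2 _ hmem _ (List.mem_singleton_self _) rfl

theorem map_fst_eq_dropLast_of_isChain {α β : Type*} {s : α} :
    ∀ {p : List (α × α × β)}, p.head?.map Prod.fst = some s →
      p.IsChain (fun a b => a.2.1 = b.1) → p.map Prod.fst = (s :: p.map (·.2.1)).dropLast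
  | [], _, _ => rfl
  | [a], hh, _ => by simpa using hh
  | a :: b :: p, hh, hc => by
    obtain ⟨hab, hc⟩ := List.isChain_cons_cons.mp hc
    have ih := map_fst_eq_dropLast_of_isChain (s := a.2.1) (p := b :: p) (by simp [hab]) hc
    simp only [List.head?_cons, Option.map_some, Option.some_inj] at hh
    simp only [List.map_cons] at ih ⊢
    rw [ih, hh]
    rfl

namespace IsPathWith

variable {R : ℕ → ℕ → Prop} {E : Set (V × V × ℕ)} {s z : V} {p : List (V × V × ℕ)}
  {e : V × V × ℕ}

theorem ne_nil (hp : IsPathWith R E s z p) : p ≠ [] := hp.1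

theorem mem_edges (hp : IsPathWith R E s z p) (he : e ∈ p) : e ∈ E := hp.2.2.2.1 e he

theorem head_fst (hp : IsPathWith R E s z p) : (p.head hp.ne_nil).1 = s := by
  simpa [List.head?_eq_some_head hp.ne_nil] using hp.2.1

theorem getLast_snd (hp : IsPathWith R E s z p) : (p.getLast hp.ne_nil).2.1 = z := by
  simpa [List.getLast?_eq_some_getLast hp.ne_nil] using hp.2.2.1

theorem map_fst_eq (hp : IsPathWith R E s z p) :
    p.map Prod.fst = (s :: p.map (·.2.1)).dropLast :=
  map_fst_eq_dropLast_of_isChain hp.2.1 hp.2.2.2.2.1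

theorem nodup_vertices (hp : IsPathWith R E s z p) : (s :: p.map (·.2.1)).Nodup :=
  hp.2.2.2.2.2.1

theorem nodup_map_fst (hp : IsPathWith R E s z p) : (p.map Prod.fst).Nodup :=
  hp.map_fst_eq ▸ hp.nodup_vertices.sublist (List.dropLast_sublist _)

theorem nodup_map_snd (hp : IsPathWith R E s z p) : (p.map (·.2.1)).Nodup :=
  (List.nodup_cons.mp hp.nodup_vertices).2

theorem snd_ne_source (hp : IsPathWith R E s z p) (he : e ∈ p) : e.2.1 ≠ s := by
  rintro rfl
  exact (List.nodup_cons.mp hp.nodup_vertices).1 (List.mem_map_of_mem he)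

theorem fst_ne_target (hp : IsPathWith R E s z p) (he : e ∈ p) : e.1 ≠ z := by
  rintro rfl
  have hlast : (s :: p.map (·.2.1)).getLast (List.cons_ne_nil _ _) = e.1 := by
    rw [List.getLast_cons (by simpa using hp.ne_nil), List.getLast_map, hp.getLast_snd]
  refine hp.nodup_vertices.getLast_notMem_dropLast (List.cons_ne_nil _ _) ?_
  rw [hlast, ← hp.map_fst_eq]
  exact List.mem_map_of_mem he

theorem source_ne_target (hp : IsPathWith R E s z p) : s ≠ z :=
  hp.getLast_snd ▸ (hp.snd_ne_source (List.getLast_mem hp.ne_nil)).symm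

theorem eq_head_of_fst_eq (hp : IsPathWith R E s z p) (he : e ∈ p) (hs : e.1 = s) :
    e = p.head hp.ne_nil :=
  List.inj_on_of_nodup_map hp.nodup_map_fst he (List.head_mem _) (hs.trans hp.head_fst.symm)

theorem eq_getLast_of_snd_eq (hp : IsPathWith R E s z p) (he : e ∈ p) (hz : e.2.1 = z) :
    e = p.getLast hp.ne_nil :=
  List.inj_on_of_nodup_map hp.nodup_map_snd he (List.getLast_mem _)
    (hz.trans hp.getLast_snd.symm)

theorem exists_edge_of_length_eq_one (hp : IsPathWith R E s z p) (h : p.length = 1) :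
    ∃ t, (s, z, t) ∈ E := by
  obtain ⟨e, rfl⟩ := List.length_eq_one_iff.mp h
  have hs := hp.head_fst
  have hz := hp.getLast_snd
  simp only [List.head_cons, List.getLast_singleton] at hs hz
  exact ⟨e.2.2, hs ▸ hz ▸ hp.mem_edges (List.mem_singleton_self e)⟩

end IsPathWith

theorem isPathWith_pair {R : ℕ → ℕ → Prop} {E : Set (V × V × ℕ)} {s v z : V} {t₁ t₂ : ℕ}
    (h₁ : (s, v, t₁) ∈ E) (h₂ : (v, z, t₂) ∈ E) (ht : R t₁ t₂)
    (hsv : s ≠ v) (hvz : v ≠ z) (hsz : s ≠ z) :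
    IsPathWith R E s z [(s, v, t₁), (v, z, t₂)] := by
  refine ⟨List.cons_ne_nil _ _, rfl, rfl, ?_, ?_, ?_, ?_⟩
  · simp only [List.mem_cons, List.not_mem_nil, or_false]
    rintro e (rfl | rfl) <;> assumption
  · exact .cons_cons rfl (.singleton _)
  · simp [hsv, hvz, hsz]
  · exact .cons_cons ht (.singleton _)

namespace IsStrictPath

variable {E : Set (V × V × ℕ)} {s z : V} {p : List (V × V × ℕ)}

theorem label_lt (hp : IsStrictPath E s z p) (i : ℕ) (hi : i + 1 < p.length) :
    p[i].2.2 < p[i + 1].2.2 :=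
  hp.2.2.2.2.2.2.getElem i hi

theorem head_label_add_two_le {τ : ℕ} (hp : IsStrictPath E s z p)
    (hτ : ∀ e ∈ E, e.2.2 ≤ τ) (hlen : 2 < p.length) : (p.head hp.ne_nil).2.2 + 2 ≤ τ := by
  have h₀ : p[0].2.2 < p[1].2.2 := hp.label_lt 0 (by omega)
  have h₁ : p[1].2.2 < p[2].2.2 := hp.label_lt 1 hlen
  have h₂ := hτ _ (hp.mem_edges (List.getElem_mem hlen))
  rw [List.head_eq_getElem]
  omega

theorem add_two_le_getLast_label {a : ℕ} (hp : IsStrictPath E s z p)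
    (hτ : ∀ e ∈ E, a ≤ e.2.2) (hlen : 2 < p.length) : a + 2 ≤ (p.getLast hp.ne_nil).2.2 := by
  obtain ⟨n, hn⟩ : ∃ n, p.length = n + 3 := ⟨p.length - 3, by omega⟩
  have h₀ := hτ _ (hp.mem_edges (List.getElem_mem (by omega : n < p.length)))
  have h₁ : p[n].2.2 < p[n + 1].2.2 := hp.label_lt n (by omega)
  have h₂ : p[n + 1].2.2 < p[n + 2].2.2 := hp.label_lt (n + 1) (by omega)
  simp only [List.getLast_eq_getElem, hn, show n + 3 - 1 = n + 2 from rfl]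
  omega

end IsStrictPath

namespace Reduced

variable {E : Set (V × V × ℕ)} {s z v : V} {t : ℕ}

theorem label_add_two_le_of_edge_from_source {τ : ℕ} (hred : Reduced E s z)
    (hτ : ∀ e ∈ E, e.2.2 ≤ τ) (h : (s, v, t) ∈ E) : t + 2 ≤ τ := by
  obtain ⟨r, hr, hmem | hmem⟩ := hred.onPath s v t h
  · have := hr.head_label_add_two_le hτ (hred.noShort r hr)
    rwa [← hr.eq_head_of_fst_eq hmem rfl] at this
  · exact absurd rfl (hr.snd_ne_source hmem)

theorem add_two_le_label_of_edge_to_target {a : ℕ} (hred : Reduced E s z)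
    (hτ : ∀ e ∈ E, a ≤ e.2.2) (h : (v, z, t) ∈ E) : a + 2 ≤ t := by
  obtain ⟨r, hr, hmem | hmem⟩ := hred.onPath v z t h
  · have := hr.add_two_le_getLast_label hτ (hred.noShort r hr)
    rwa [← hr.eq_getLast_of_snd_eq hmem rfl] at this
  · exact absurd rfl (hr.fst_ne_target hmem)

end Reduced

theorem V11_empty_general (E : Set (V × V × ℕ)) (s z : V)
    (hτ : ∀ e ∈ E, 1 ≤ e.2.2 ∧ e.2.2 ≤ 4)
    (hred : Reduced E s z) :
    ¬ ∃ v : V, (∃ p, IsStrictPath E s v p ∧ p.length = 1) ∧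
      (∃ q, IsStrictPath E v z q ∧ q.length = 1) := by
  rintro ⟨v, ⟨p, hp, hp₁⟩, q, hq, hq₁⟩
  obtain ⟨t₁, h₁⟩ := hp.exists_edge_of_length_eq_one hp₁
  obtain ⟨t₂, h₂⟩ := hq.exists_edge_of_length_eq_one hq₁
  have ht₁ := hred.label_add_two_le_of_edge_from_source (fun e he => (hτ e he).2) h₁
  have ht₂ := hred.add_two_le_label_of_edge_to_target (fun e he => (hτ e he).1) h₂
  obtain ⟨r, hr, -⟩ := hred.onPath _ _ _ h₁
  have hpair : IsStrictPath E s z [(s, v, t₁), (v, z, t₂)] :=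
    isPathWith_pair h₁ h₂ (by omega) hp.source_ne_target hq.source_ne_target hr.source_ne_target
  simpa using hred.noShort _ hpair

/-- In a reduced temporal graph with maximum label `τ = 4`, the set `V_{(1,1)}`
is empty: there is no vertex `v` such that both the shortest strict temporal
`(s,v)`-path and the shortest strict temporal `(v,z)`-path have length `1`. -/
theorem V11_empty (E : Set (V × V × ℕ)) (s z : V) (hsz : s ≠ z)
    (hsym : ∀ u v t, (u, v, t) ∈ E → (v, u, t) ∈ E)
    (hτ : ∀ e ∈ E, 1 ≤ e.2.2 ∧ e.2.2 ≤ 4)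
    (hred : Reduced E s z) :
    ¬ ∃ v : V, (∃ p, IsStrictPath E s v p ∧ p.length = 1) ∧
      (∃ q, IsStrictPath E v z q ∧ q.length = 1) :=
  V11_empty_general E s z hτ hred

end TempSep
end

section
/- Let G = (V,E) be a static graph, s,z distinct vertices, ℓ, k naturals, and let G' be the temporal graph with τ = ℓ whose layer at every time t ∈ {1,...,ℓ} equals G. Then G has a vertex set S ⊆ V \ {s,z} of size at most k destroying all (s,z)-paths of length at most ℓ if and only if G' has a strict temporal (s,z)-separator of size at most k. -/
namespace TempSep

variable {V : Type*}

/-- A static `(s,z)`-path given as a list of directed edges. -/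
def IsStaticPath (F : Set (V × V)) (s z : V) (p : List (V × V)) : Prop :=
  p ≠ [] ∧
  p.head?.map Prod.fst = some s ∧
  p.getLast?.map Prod.snd = some z ∧
  (∀ e ∈ p, e ∈ F) ∧
  p.Chain' (fun a b => a.2 = b.1) ∧
  (s :: p.map Prod.snd).Nodup

/-- The static path `p` avoids the vertex set `S`. -/
def StaticAvoids (S : Set V) (p : List (V × V)) : Prop :=
  ∀ e ∈ p, e.1 ∉ S ∧ e.2 ∉ S

/-- `S` is a static `(s,z)`-separator. -/
def IsStaticSep (F : Set (V × V)) (s z : V) (S : Set V) : Prop :=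
  s ∉ S ∧ z ∉ S ∧ ∀ p, IsStaticPath F s z p → ¬ StaticAvoids S p

/-- The (edge set of the) underlying static graph of a temporal graph. -/
def underlying (E : Set (V × V × ℕ)) : Set (V × V) :=
  {uv | ∃ t, (uv.1, uv.2, t) ∈ E}

/-! Forgetting the time labels of a temporal path and relabelling a static path by `1, 2, …` are
mutually inverse on the edge sequence; a strictly increasing labelling inside `{1, …, ℓ}` has at
most `ℓ` labels, so strict temporal paths in the `ℓ`-fold layered graph are exactly the static
paths of length at most `ℓ`, and avoiding a vertex set is a property of the edge sequence alone. -/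

def forgetTime (e : V × V × ℕ) : V × V := (e.1, e.2.1)

def addTimes (t : ℕ) : List (V × V) → List (V × V × ℕ)
  | [] => []
  | e :: l => (e.1, e.2, t) :: addTimes (t + 1) l

def layered (F : Set (V × V)) (ℓ : ℕ) : Set (V × V × ℕ) :=
  {e | (e.1, e.2.1) ∈ F ∧ 1 ≤ e.2.2 ∧ e.2.2 ≤ ℓ}

lemma map_forgetTime_addTimes (t : ℕ) (l : List (V × V)) :
    (addTimes t l).map forgetTime = l := by
  induction l generalizing t with
  | nil => rfl
  | cons e l ih => simp [addTimes, forgetTime, ih]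

lemma mem_addTimes {t : ℕ} {l : List (V × V)} {x : V × V × ℕ} (hx : x ∈ addTimes t l) :
    forgetTime x ∈ l ∧ t ≤ x.2.2 ∧ x.2.2 < t + l.length := by
  induction l generalizing t with
  | nil => simp [addTimes] at hx
  | cons e l ih =>
    simp only [addTimes, List.mem_cons] at hx
    rcases hx with rfl | hx
    · simp [forgetTime]
    · obtain ⟨hl, ht, ht'⟩ := ih hx
      exact ⟨List.mem_cons_of_mem _ hl, by omega, by simp only [List.length_cons]; omega⟩

lemma isChain_time_addTimes (t : ℕ) (l : List (V × V)) :
    (addTimes t l).IsChain (fun a b => a.2.2 < b.2.2) := by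
  induction l generalizing t with
  | nil => exact List.isChain_nil
  | cons e l ih =>
    refine List.isChain_cons.mpr ⟨fun b hb => ?_, ih (t + 1)⟩
    have := (mem_addTimes (List.mem_of_mem_head? hb)).2.1
    simp only
    omega

lemma length_le_of_isChain_lt {L : List ℕ} {a b : ℕ} (hL : L.IsChain (· < ·))
    (hmem : ∀ x ∈ L, x ∈ Finset.Icc a b) : L.length ≤ b + 1 - a := by
  have hnd : L.Nodup := (List.isChain_iff_pairwise.mp hL).imp Nat.ne_of_lt
  calc L.length = L.toFinset.card := (List.toFinset_card_of_nodup hnd).symm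
    _ ≤ (Finset.Icc a b).card :=
      Finset.card_le_card fun x hx => hmem x (List.mem_toFinset.mp hx)
    _ = b + 1 - a := Nat.card_Icc a b

lemma staticAvoids_map_forgetTime_iff {S : Set V} {p : List (V × V × ℕ)} :
    StaticAvoids S (p.map forgetTime) ↔ Avoids S p := by
  simp only [StaticAvoids, Avoids, List.forall_mem_map]
  rfl

lemma IsPathWith.isStaticPath_map_forgetTime {R : ℕ → ℕ → Prop} {E : Set (V × V × ℕ)}
    {F : Set (V × V)} {s z : V} {p : List (V × V × ℕ)} (hp : IsPathWith R E s z p)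
    (hEF : ∀ e ∈ E, forgetTime e ∈ F) : IsStaticPath F s z (p.map forgetTime) := by
  obtain ⟨hne, hhead, hlast, hmem, hchain, hnodup, -⟩ := hp
  refine ⟨by simpa using hne, ?_, ?_, ?_, ?_, ?_⟩
  · rwa [List.head?_map, Option.map_map]
  · rwa [List.getLast?_map, Option.map_map]
  · exact List.forall_mem_map.mpr fun e he => hEF e (hmem e he)
  · exact (List.isChain_map forgetTime).mpr hchain
  · rwa [List.map_map]

lemma IsStaticPath.isPathWith {R : ℕ → ℕ → Prop} {E : Set (V × V × ℕ)}
    {F : Set (V × V)} {s z : V} {p : List (V × V × ℕ)}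
    (hq : IsStaticPath F s z (p.map forgetTime)) (hE : ∀ e ∈ p, e ∈ E)
    (hR : p.IsChain fun a b => R a.2.2 b.2.2) : IsPathWith R E s z p := by
  obtain ⟨hne, hhead, hlast, -, hchain, hnodup⟩ := hq
  refine ⟨by simpa using hne, ?_, ?_, hE, (List.isChain_map forgetTime).mp hchain, ?_, hR⟩
  · rwa [List.head?_map, Option.map_map] at hhead
  · rwa [List.getLast?_map, Option.map_map] at hlast
  · rwa [List.map_map] at hnodup

lemma IsStrictPath.length_le {E : Set (V × V × ℕ)} {s z : V} {p : List (V × V × ℕ)} {ℓ : ℕ}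
    (hp : IsStrictPath E s z p) (hE : ∀ e ∈ E, e.2.2 ∈ Finset.Icc 1 ℓ) : p.length ≤ ℓ := by
  obtain ⟨-, -, -, hmem, -, -, htime⟩ := hp
  simpa using length_le_of_isChain_lt ((List.isChain_map _).mpr htime)
    (List.forall_mem_map.mpr fun e he => hE e (hmem e he))

lemma IsStaticPath.isStrictPath_addTimes {F : Set (V × V)} {s z : V} {q : List (V × V)} {ℓ : ℕ}
    (hq : IsStaticPath F s z q) (hlen : q.length ≤ ℓ) :
    IsStrictPath (layered F ℓ) s z (addTimes 1 q) := by
  have hF : ∀ e ∈ q, e ∈ F := hq.2.2.2.1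
  rw [← map_forgetTime_addTimes 1 q] at hq
  refine hq.isPathWith (fun e he => ?_) (isChain_time_addTimes 1 q)
  obtain ⟨he', ht, ht'⟩ := mem_addTimes he
  exact ⟨hF _ he', ht, by omega⟩

theorem length_bounded_sep_iff_strict_temporal_sep_general (F : Set (V × V))
    (s z : V) (ℓ k : ℕ) :
    (∃ S : Set V, S.Finite ∧ S.ncard ≤ k ∧ s ∉ S ∧ z ∉ S ∧
      ∀ p, IsStaticPath F s z p → p.length ≤ ℓ → ¬ StaticAvoids S p) ↔
      (∃ S : Set V, S.Finite ∧ S.ncard ≤ k ∧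
        IsStrictSep {e : V × V × ℕ | (e.1, e.2.1) ∈ F ∧ 1 ≤ e.2.2 ∧ e.2.2 ≤ ℓ}
          s z S) := by
  constructor
  · rintro ⟨S, hfin, hcard, hs, hz, hsep⟩
    refine ⟨S, hfin, hcard, hs, hz, fun p hp hav => ?_⟩
    have hlen : p.length ≤ ℓ := hp.length_le fun e he => Finset.mem_Icc.mpr he.2
    exact hsep _ (hp.isStaticPath_map_forgetTime fun e he => he.1) (by rwa [List.length_map])
      (staticAvoids_map_forgetTime_iff.mpr hav)
  · rintro ⟨S, hfin, hcard, hs, hz, hsep⟩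
    refine ⟨S, hfin, hcard, hs, hz, fun q hq hlen hav => ?_⟩
    rw [← map_forgetTime_addTimes 1 q, staticAvoids_map_forgetTime_iff] at hav
    exact hsep _ (hq.isStrictPath_addTimes hlen) hav

/-- A static graph has a vertex set of size at most `k` destroying all
`(s,z)`-paths of length at most `ℓ` iff the temporal graph whose every layer
`t ∈ {1,…,ℓ}` equals the static graph has a strict temporal `(s,z)`-separator
of size at most `k`. -/
theorem length_bounded_sep_iff_strict_temporal_sep (F : Set (V × V))
    (s z : V) (hsz : s ≠ z) (ℓ k : ℕ) :
    (∃ S : Set V, S.Finite ∧ S.ncard ≤ k ∧ s ∉ S ∧ z ∉ S ∧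
      ∀ p, IsStaticPath F s z p → p.length ≤ ℓ → ¬ StaticAvoids S p) ↔
      (∃ S : Set V, S.Finite ∧ S.ncard ≤ k ∧
        IsStrictSep {e : V × V × ℕ | (e.1, e.2.1) ∈ F ∧ 1 ≤ e.2.2 ∧ e.2.2 ≤ ℓ}
          s z S) :=
  length_bounded_sep_iff_strict_temporal_sep_general F s z ℓ k

end TempSep
end
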